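/- arXiv:math/0405553 — 3 statements merged into one kernel-verified Lean document; each statement's English description precedes it below -/
import Mathlib

section
/- Let (W,S) and (W,S') be two Coxeter generating sets for the same group W, and let R_S and R_{S'} denote the respective sets of reflections (conjugates of elements of S, resp. S'). If S ⊆ R_{S'}, then R_S = R_{S'}. -/
open scoped Classical

/-- In a group, if `a` and `b` are involutions (or trivial) and `(a*b)` has odd order dividing
`2k+1`, then `a` and `b` are conjugate. -/
private lemma isConj_of_odd_pow {G : Type*} [Group G] {a b : G}
    (ha : a * a = 1) (hb : b * b = 1) {k : ℕ} (h : (a * b) ^ (2 * k + 1) = 1) :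
    IsConj a b := by
  have hainv : a⁻¹ = a := inv_eq_of_mul_eq_one_right ha
  have hbinv : b⁻¹ = b := inv_eq_of_mul_eq_one_right hb
  have shift : ∀ n : ℕ, a * (b * a) ^ n = (a * b) ^ n * a := by
    intro n
    induction n with
    | zero => simp
    | succ n ih =>
      rw [pow_succ, ← mul_assoc, ih, pow_succ]
      group
  rw [isConj_iff]
  refine ⟨(a * b) ^ k, ?_⟩
  have hinvab : ((a * b) ^ k)⁻¹ = (b * a) ^ k := by
    rw [← inv_pow, mul_inv_rev, hainv, hbinv]
  rw [hinvab, mul_assoc, shift k, ← mul_assoc, ← pow_add]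
  have h2k : (a * b) ^ (k + k) = b * a := by
    have heq : (a * b) ^ (2 * k + 1) = (a * b) ^ (k + k) * (a * b) := by
      rw [← pow_succ]
      congr 1
      ring
    rw [heq] at h
    rw [eq_inv_of_mul_eq_one_left h, mul_inv_rev, hainv, hbinv]
  rw [h2k, mul_assoc, ha, mul_one]

section aux

variable {B : Type*} {W : Type*} [Group W] {M : CoxeterMatrix B}

/-- The sign map relative to conjugacy with a fixed element `t` is liftable. -/
private lemma sign_liftable (cs : CoxeterSystem M W) (t : W) :
    M.IsLiftable (fun i => if IsConj t (cs.simple i) then (-1 : ℤˣ) else 1) := by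
  intro i j
  set g : B → ℤˣ := fun i => if IsConj t (cs.simple i) then (-1 : ℤˣ) else 1 with hg
  rcases Nat.even_or_odd (M i j) with he | ho
  · obtain ⟨r, hr⟩ := he
    rw [hr, ← two_mul, pow_mul, Int.units_sq, one_pow]
  · obtain ⟨k, hk⟩ := ho
    have hconj : IsConj (cs.simple i) (cs.simple j) := by
      have hpow := cs.simple_mul_simple_pow i j
      rw [hk] at hpow
      exact isConj_of_odd_pow (cs.simple_mul_simple_self i) (cs.simple_mul_simple_self j) hpow
    have : g i = g j := by
      simp only [hg]
      by_cases hc : IsConj t (cs.simple i)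
      · rw [if_pos hc, if_pos (hc.trans hconj)]
      · rw [if_neg hc, if_neg (fun hcj => hc (hcj.trans hconj.symm))]
    rw [this]
    have hsq : g j * g j = 1 := Int.units_mul_self _
    rw [hsq, one_pow]

/-- The value of the sign character on any word product. -/
private lemma sign_eval (cs : CoxeterSystem M W) (t : W) (ω : List B) :
    (cs.lift ⟨fun i => if IsConj t (cs.simple i) then (-1 : ℤˣ) else 1, sign_liftable cs t⟩)
      (cs.wordProd ω)
    = (ω.map (fun i => if IsConj t (cs.simple i) then (-1 : ℤˣ) else 1)).prod := by
  rw [CoxeterSystem.wordProd, map_list_prod, List.map_map]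
  congr 1
  apply List.map_congr_left
  intro i _
  simp [CoxeterSystem.lift_apply_simple]

end aux

/-- If every simple generator of a Coxeter system `(W,S)` is a reflection of another
Coxeter system `(W,S')` on the same group, then the sets of reflections coincide. -/
theorem stmt_6 {B B' : Type*} {W : Type*} [Group W]
    {M : CoxeterMatrix B} {M' : CoxeterMatrix B'}
    (cs : CoxeterSystem M W) (cs' : CoxeterSystem M' W)
    (h : ∀ i : B, cs'.IsReflection (cs.simple i)) :
    ∀ w : W, cs.IsReflection w ↔ cs'.IsReflection w := by
  intro t
  constructor
  · rintro ⟨u, i, rfl⟩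
    exact (h i).conj u
  · intro ht
    -- the sign characters attached to the conjugacy class of `t`
    set g : B → ℤˣ := fun i => if IsConj t (cs.simple i) then (-1 : ℤˣ) else 1 with hgdef
    set g' : B' → ℤˣ := fun j => if IsConj t (cs'.simple j) then (-1 : ℤˣ) else 1 with hg'def
    set χ : W →* ℤˣ := cs.lift ⟨g, sign_liftable cs t⟩ with hχdef
    set χ' : W →* ℤˣ := cs'.lift ⟨g', sign_liftable cs' t⟩ with hχ'def
    -- χ' takes the value g i on cs.simple i
    have hχ'simple : ∀ i : B, χ' (cs.simple i) = g i := by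
      intro i
      obtain ⟨u, j, hu⟩ := h i
      have hconj : IsConj (cs'.simple j) (cs.simple i) := by
        rw [isConj_iff]
        exact ⟨u, hu.symm⟩
      have : χ' (cs.simple i) = g' j := by
        rw [hu, map_mul, map_mul, map_inv, hχ'def, CoxeterSystem.lift_apply_simple,
          mul_comm (χ' u) (g' j), mul_assoc, mul_inv_cancel, mul_one]
      rw [this, hg'def, hgdef]
      by_cases hc : IsConj t (cs.simple i)
      · simp only []
        rw [if_pos (hc.trans hconj.symm), if_pos hc]
      · simp only []
        rw [if_neg (fun hcj => hc (hcj.trans hconj)), if_neg hc]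
    -- hence χ = χ' everywhere
    have hχeq : ∀ w : W, χ w = χ' w := by
      intro w
      obtain ⟨ω, rfl⟩ := cs.wordProd_surjective w
      rw [hχdef, sign_eval cs t ω, CoxeterSystem.wordProd, map_list_prod, List.map_map]
      congr 1
      apply List.map_congr_left
      intro i _
      simp only [Function.comp_apply]
      rw [hχ'simple i]
    -- χ' t = -1 since t is a reflection of cs'
    have hχ't : χ' t = -1 := by
      obtain ⟨u, j, hu⟩ := ht
      have hconjt : IsConj t (cs'.simple j) := by
        rw [isConj_iff]
        refine ⟨u⁻¹, ?_⟩
        rw [hu]; group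
      have : χ' t = g' j := by
        rw [hu, map_mul, map_mul, map_inv, hχ'def, CoxeterSystem.lift_apply_simple,
          mul_comm (χ' u) (g' j), mul_assoc, mul_inv_cancel, mul_one]
      rw [this, hg'def]
      simp only []
      rw [if_pos]
      exact hconjt
    -- so χ t = -1, hence some letter of a word for t is conjugate to t
    obtain ⟨ω, hω⟩ := cs.wordProd_surjective t
    have hprod : (ω.map g).prod = -1 := by
      have h1 : χ (cs.wordProd ω) = (ω.map g).prod := sign_eval cs t ω
      rw [hω, hχeq, hχ't] at h1
      exact h1.symm
    have hexists : ∃ i ∈ ω, IsConj t (cs.simple i) := by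
      by_contra hno
      push_neg at hno
      have : (ω.map g).prod = 1 := by
        apply List.prod_eq_one
        intro x hx
        rw [List.mem_map] at hx
        obtain ⟨i, hi, rfl⟩ := hx
        rw [hgdef]
        simp only []
        rw [if_neg (hno i hi)]
      rw [this] at hprod
      exact absurd hprod (by decide)
    obtain ⟨i, _, hconj⟩ := hexists
    rw [isConj_iff] at hconj
    obtain ⟨c, hc⟩ := hconj
    refine ⟨c⁻¹, i, ?_⟩
    rw [← hc]; group
end

section
/- Let (W,S) be a Coxeter system with S finite and let w ∈ W satisfy w² = 1, w ≠ 1, and ℓ(w) = min{ℓ(vwv⁻¹) : v ∈ W}. Then the parabolic subgroup W_{S(w)} is finite and w is the element of longest length in W_{S(w)}. -/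
/-!
Let `I` be the set of letters of a reduced word for `w`. If `s` is a left descent of `w`, the
strong exchange condition gives either `s w s = w` or `ℓ(s w s) < ℓ(w)`, and minimality rules out
the latter; so every left descent commutes with `w`. Rotating reduced words (`s ω' ↦ ω' s`) then
shows that every `s ∈ I` is a left descent. Conjugation by such an `s` preserves the inversion
set `N(w)`, so `N(w)` contains every reflection of `W_I`, in particular every inversion of every
`v ∈ W_I`. Hence `ℓ(v) = |N(v)| ≤ |N(w)| = ℓ(w)`: `W_I` has bounded length, so it is finite and
`w` is its longest element.

The strong exchange condition comes from the reflection representation of `W` on `T × ℤ/2`.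
-/

theorem conj_eq_iff_eq_inv_conj {G : Type*} [Group G] {a t y : G} :
    a * t * a⁻¹ = y ↔ t = a⁻¹ * y * a := by
  constructor <;> rintro rfl <;> group

namespace CoxeterSystem

variable {B W : Type*} [Group W] {M : CoxeterMatrix B} (cs : CoxeterSystem M W)

local prefix:100 "σ" => cs.simple
local prefix:100 "π" => cs.wordProd
local prefix:100 "ℓ" => cs.length
local prefix:100 "ris" => cs.rightInvSeq

theorem simple_conj_eq_simple_iff {i : B} {t : W} : σ i * t * σ i = σ i ↔ t = σ i := by
  constructor
  · intro h
    simpa [mul_assoc] using congrArg (σ i * · * σ i) h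
  · rintro rfl
    simp

theorem simple_mul_simple_pow_inv (i j : B) (k : ℕ) :
    ((σ i * σ j) ^ k)⁻¹ = (σ j * σ i) ^ k := by
  rw [← inv_pow, mul_inv_rev, inv_simple, inv_simple]

theorem simple_mul_simple_pow_inv_conj (i j : B) (k : ℕ) :
    ((σ i * σ j) ^ k)⁻¹ * σ j * (σ i * σ j) ^ k = (σ j * σ i) ^ (2 * k) * σ j := by
  rw [simple_mul_simple_pow_inv, mul_assoc, ← mul_pow_mul, two_mul, pow_add, mul_assoc]

theorem simple_mul_simple_mul_simple_pow_inv_conj (i j : B) (k : ℕ) :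
    (σ j * (σ i * σ j) ^ k)⁻¹ * σ i * (σ j * (σ i * σ j) ^ k) =
      (σ j * σ i) ^ (2 * k + 1) * σ j := by
  rw [mul_inv_rev, simple_mul_simple_pow_inv, inv_simple, ← mul_pow_mul,
    show 2 * k + 1 = k + 1 + k by ring, pow_add, pow_succ]
  simp only [mul_assoc]

open Classical in
/-- `s_i (t, ε) = (s_i t s_i, ε + [t = s_i])`, the action of a simple reflection in the reflection
representation on `T × ℤ/2`; letting it act on all of `W × ZMod 2` saves carrying the reflection
predicate. -/
noncomputable def reflPerm (i : B) : Equiv.Perm (W × ZMod 2) :=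
  Function.Involutive.toPerm (fun p => (σ i * p.1 * σ i, p.2 + if p.1 = σ i then 1 else 0)) <| by
    rintro ⟨t, e⟩
    dsimp only
    by_cases ht : t = σ i
    · simp [ht, add_assoc, CharTwo.add_self_eq_zero]
    · rw [if_neg ht, if_neg (cs.simple_conj_eq_simple_iff.not.mpr ht)]
      simp [mul_assoc]

open Classical in
theorem reflPerm_apply (i : B) (t : W) (e : ZMod 2) :
    cs.reflPerm i (t, e) = (σ i * t * σ i, e + if t = σ i then 1 else 0) := rfl

open Classical in
theorem reflPerm_mul_reflPerm_pow_apply (i j : B) (k : ℕ) (t : W) (e : ZMod 2) :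
    ((cs.reflPerm i * cs.reflPerm j) ^ k) (t, e) =
      ((σ i * σ j) ^ k * t * ((σ i * σ j) ^ k)⁻¹,
        e + ∑ r ∈ Finset.range (2 * k), if t = (σ j * σ i) ^ r * σ j then 1 else 0) := by
  induction k with
  | zero => simp
  | succ k ih =>
    have hj : (σ i * σ j) ^ k * t * ((σ i * σ j) ^ k)⁻¹ = σ j ↔
        t = (σ j * σ i) ^ (2 * k) * σ j := by
      rw [conj_eq_iff_eq_inv_conj, simple_mul_simple_pow_inv_conj]
    have hi : σ j * ((σ i * σ j) ^ k * t * ((σ i * σ j) ^ k)⁻¹) * σ j = σ i ↔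
        t = (σ j * σ i) ^ (2 * k + 1) * σ j := by
      rw [← simple_mul_simple_mul_simple_pow_inv_conj, ← conj_eq_iff_eq_inv_conj,
        mul_inv_rev, inv_simple]
      simp only [mul_assoc]
    rw [pow_succ' (cs.reflPerm i * cs.reflPerm j), Equiv.Perm.mul_apply, ih, Equiv.Perm.mul_apply,
      reflPerm_apply, reflPerm_apply, hj, hi, show 2 * (k + 1) = 2 * k + 1 + 1 by ring,
      Finset.sum_range_succ, Finset.sum_range_succ, pow_succ' (σ i * σ j), mul_inv_rev,
      mul_inv_rev, inv_simple, inv_simple]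
    refine Prod.ext ?_ ?_
    · simp only [mul_assoc]
    · simp only [add_assoc]

open Classical in
theorem isLiftable_reflPerm : M.IsLiftable cs.reflPerm := by
  intro i j
  ext ⟨t, e⟩ : 1
  -- the summand is periodic of period `M i j`, so the sum over `2 * M i j` terms is even
  have hperiodic (r : ℕ) : (σ j * σ i) ^ (M i j + r) * σ j = (σ j * σ i) ^ r * σ j := by
    rw [pow_add, simple_mul_simple_pow', one_mul]
  rw [reflPerm_mul_reflPerm_pow_apply, Equiv.Perm.one_apply, simple_mul_simple_pow, two_mul,
    Finset.sum_range_add]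
  simp only [hperiodic, one_mul, inv_one, mul_one, CharTwo.add_self_eq_zero, add_zero]

noncomputable def reflRep : W →* Equiv.Perm (W × ZMod 2) :=
  cs.lift ⟨cs.reflPerm, cs.isLiftable_reflPerm⟩

theorem reflRep_simple (i : B) : cs.reflRep (σ i) = cs.reflPerm i :=
  cs.lift_apply_simple cs.isLiftable_reflPerm i

open Classical in
theorem reflRep_wordProd_apply (ω : List B) (t : W) (e : ZMod 2) :
    cs.reflRep (π ω) (t, e) = (π ω * t * (π ω)⁻¹, e + (ris ω).count t) := by
  induction ω generalizing e with
  | nil => simp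
  | cons i ω ih =>
    have hi : π ω * t * (π ω)⁻¹ = σ i ↔ ((π ω)⁻¹ * σ i * π ω == t) = true := by
      rw [conj_eq_iff_eq_inv_conj, beq_iff_eq, eq_comm]
    rw [wordProd_cons, map_mul, Equiv.Perm.mul_apply, ih, reflRep_simple, reflPerm_apply, hi,
      rightInvSeq, List.count_cons, mul_inv_rev, inv_simple]
    refine Prod.ext ?_ ?_
    · simp only [mul_assoc]
    · split_ifs <;> push_cast <;> ring

noncomputable def reflCocycle (u t : W) : ZMod 2 := (cs.reflRep u (t, 0)).2

open Classical in
theorem reflCocycle_wordProd (ω : List B) (t : W) :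
    cs.reflCocycle (π ω) t = (ris ω).count t := by
  rw [reflCocycle, reflRep_wordProd_apply, zero_add]

theorem reflRep_apply (u t : W) (e : ZMod 2) :
    cs.reflRep u (t, e) = (u * t * u⁻¹, e + cs.reflCocycle u t) := by
  obtain ⟨ω, rfl⟩ := cs.wordProd_surjective u
  rw [reflRep_wordProd_apply, reflCocycle_wordProd]

theorem reflCocycle_mul (u v t : W) :
    cs.reflCocycle (u * v) t = cs.reflCocycle v t + cs.reflCocycle u (v * t * v⁻¹) := by
  rw [reflCocycle, map_mul, Equiv.Perm.mul_apply, reflRep_apply, reflRep_apply, zero_add]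

theorem reflCocycle_one (t : W) : cs.reflCocycle 1 t = 0 := by
  simp [reflCocycle]

theorem reflCocycle_simple_self (i : B) : cs.reflCocycle (σ i) (σ i) = 1 := by
  simp [reflCocycle, reflRep_simple, reflPerm_apply]

theorem reflCocycle_self_of_isReflection {t : W} (ht : cs.IsReflection t) :
    cs.reflCocycle t t = 1 := by
  obtain ⟨v, i, rfl⟩ := ht
  -- the contributions of `v` and `v⁻¹` cancel because `reflCocycle (v⁻¹ * v) (σ i) = 0`
  have hsplit := cs.reflCocycle_mul (v * σ i) v⁻¹ (v * σ i * v⁻¹)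
  rw [cs.reflCocycle_mul v (σ i), show v⁻¹ * (v * σ i * v⁻¹) * v⁻¹⁻¹ = σ i by group,
    reflCocycle_simple_self, show σ i * σ i * (σ i)⁻¹ = σ i by group] at hsplit
  have hcancel := cs.reflCocycle_mul v⁻¹ v (σ i)
  rw [inv_mul_cancel, reflCocycle_one] at hcancel
  linear_combination hsplit - hcancel

/-- The strong exchange condition. -/
theorem mem_rightInvSeq_of_isRightInversion {ω : List B} {t : W}
    (ht : cs.IsRightInversion (π ω) t) : t ∈ ris ω := by
  classical
  obtain ⟨hrefl, hlt⟩ := ht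
  obtain ⟨κ, hκ, hκw⟩ := cs.exists_isReduced (π ω * t)
  have hκt : t ∉ ris κ := fun hmem => by
    have := (cs.isRightInversion_of_mem_rightInvSeq hκ hmem).2
    rw [← hκw, mul_assoc, hrefl.mul_self, mul_one] at this
    omega
  have hη : cs.reflCocycle (π ω) t = 1 := by
    calc cs.reflCocycle (π ω) t = cs.reflCocycle (π κ * t) t := by
          rw [← hκw, mul_assoc, hrefl.mul_self, mul_one]
      _ = 1 := by
          rw [reflCocycle_mul, cs.reflCocycle_self_of_isReflection hrefl, mul_inv_cancel_right,
            reflCocycle_wordProd, List.count_eq_zero_of_not_mem hκt, Nat.cast_zero, add_zero]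
  by_contra hωt
  rw [reflCocycle_wordProd, List.count_eq_zero_of_not_mem hωt, Nat.cast_zero] at hη
  exact zero_ne_one hη

theorem exists_wordProd_eq_of_mem_closure {S : Set B} {v : W}
    (hv : v ∈ Subgroup.closure (cs.simple '' S)) : ∃ ν : List B, (∀ b ∈ ν, b ∈ S) ∧ π ν = v := by
  have step {x : W} {i : B} (hi : i ∈ S) (hx : ∃ ν : List B, (∀ b ∈ ν, b ∈ S) ∧ π ν = x) :
      ∃ ν : List B, (∀ b ∈ ν, b ∈ S) ∧ π ν = x * σ i := by
    obtain ⟨ν, hν, rfl⟩ := hx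
    refine ⟨ν ++ [i], fun b hb => ?_, by simp [wordProd_append]⟩
    rcases List.mem_append.mp hb with hb | hb
    · exact hν b hb
    · rwa [List.mem_singleton.mp hb]
  induction hv using Subgroup.closure_induction_right with
  | one => exact ⟨[], by simp, rfl⟩
  | mul_right x _ y hy ih =>
    obtain ⟨i, hi, rfl⟩ := hy
    exact step hi ih
  | mul_inv_cancel x _ y hy ih =>
    obtain ⟨i, hi, rfl⟩ := hy
    rw [inv_simple]
    exact step hi ih

theorem length_le_of_forall_isRightInversion_imp {u v : W}
    (h : ∀ t, cs.IsRightInversion v t → cs.IsRightInversion u t) : ℓ v ≤ ℓ u := by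
  obtain ⟨ν, hν, rfl⟩ := cs.exists_isReduced v
  obtain ⟨ω, hω, rfl⟩ := cs.exists_isReduced u
  have hsub : ris ν ⊆ ris ω := fun t ht =>
    cs.mem_rightInvSeq_of_isRightInversion (h t (cs.isRightInversion_of_mem_rightInvSeq hν ht))
  have := (hν.nodup_rightInvSeq.subperm hsub).length_le
  rwa [length_rightInvSeq, length_rightInvSeq, ← hν.eq, ← hω.eq] at this

theorem finite_setOf_length_le [Finite B] (n : ℕ) : {v : W | ℓ v ≤ n}.Finite := by
  refine ((List.finite_length_le B n).image cs.wordProd).subset fun v hv => ?_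
  obtain ⟨ω, hω, rfl⟩ := cs.exists_isReduced v
  exact ⟨ω, by simpa [hω.eq] using hv, rfl⟩

variable {cs} in
theorem IsReduced.isLeftDescent_head {i : B} {l : List B} (h : cs.IsReduced (i :: l)) :
    cs.IsLeftDescent (π (i :: l)) i := by
  have := cs.length_wordProd_le l
  rw [IsLeftDescent, h.eq, wordProd_cons, simple_mul_simple_cancel_left, List.length_cons]
  omega

variable {cs} in
theorem IsReduced.append_singleton_of_commute {i : B} {l : List B} (h : cs.IsReduced (i :: l))
    (hcomm : Commute (σ i) (π (i :: l))) :
    cs.IsReduced (l ++ [i]) ∧ π (l ++ [i]) = π (i :: l) := by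
  have hprod : π (l ++ [i]) = π (i :: l) := by
    have hl := hcomm.eq
    rw [wordProd_cons, simple_mul_simple_cancel_left] at hl
    rw [wordProd_append, wordProd_singleton, wordProd_cons]
    nth_rewrite 1 [hl]
    simp [mul_assoc]
  refine ⟨?_, hprod⟩
  rw [IsReduced, hprod, h.eq]
  simp

theorem isRightInversion_simple_conj_of_commute {w : W} {i : B} (hcomm : Commute (σ i) w)
    (hi : cs.IsLeftDescent w i) {t : W} (ht : cs.IsRightInversion w t) :
    cs.IsRightInversion w (σ i * t * σ i) := by
  obtain ⟨κ, hκ, hκw⟩ := cs.exists_isReduced (σ i * w)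
  have hcons : π (i :: κ) = w := by rw [wordProd_cons, ← hκw, simple_mul_simple_cancel_left]
  have hconcat : π (κ.concat i) = w := by
    rw [wordProd_concat, ← hκw, hcomm.eq, mul_assoc, simple_mul_simple_self, mul_one]
  have hred : cs.IsReduced (κ.concat i) := by
    rcases cs.length_simple_mul w i with h | h
    · exact absurd hi (by rw [IsLeftDescent]; omega)
    · rw [IsReduced, hconcat, List.length_concat, ← hκ.eq, ← hκw, h]
  have hκi : (π κ)⁻¹ * σ i * π κ = σ i := by
    rw [← hκw, mul_inv_rev, inv_simple]
    simp [mul_assoc, hcomm.eq]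
  rw [← hcons] at ht
  rw [← hconcat]
  apply cs.isRightInversion_of_mem_rightInvSeq hred
  have hmem := cs.mem_rightInvSeq_of_isRightInversion ht
  rw [rightInvSeq, List.mem_cons, hκi] at hmem
  rw [rightInvSeq_concat, List.concat_eq_append, List.mem_append, List.mem_singleton]
  rcases hmem with rfl | hmem
  · simp
  · exact Or.inl (List.mem_map.mpr ⟨t, hmem, by simp⟩)

theorem isRightInversion_wordProd_conj {w : W} {S : Set B}
    (hS : ∀ i ∈ S, Commute (σ i) w ∧ cs.IsLeftDescent w i) {l : List B} (hl : ∀ b ∈ l, b ∈ S)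
    {c : B} (hc : c ∈ S) : cs.IsRightInversion w (π l * σ c * (π l)⁻¹) := by
  induction l with
  | nil =>
    obtain ⟨hcomm, hdesc⟩ := hS c hc
    rw [wordProd_nil, one_mul, inv_one, mul_one]
    refine ⟨cs.isReflection_simple c, ?_⟩
    rw [← hcomm.eq]
    exact hdesc
  | cons b l ih =>
    obtain ⟨hcomm, hdesc⟩ := hS b (hl b List.mem_cons_self)
    have := cs.isRightInversion_simple_conj_of_commute hcomm hdesc
      (ih fun b hb => hl b (List.mem_cons_of_mem _ hb))
    rw [wordProd_cons, mul_inv_rev, inv_simple]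
    simpa only [mul_assoc] using this

theorem isRightInversion_of_mem_rightInvSeq_of_forall_mem {w : W} {S : Set B}
    (hS : ∀ i ∈ S, Commute (σ i) w ∧ cs.IsLeftDescent w i) {ν : List B} (hν : ∀ b ∈ ν, b ∈ S)
    {t : W} (ht : t ∈ ris ν) : cs.IsRightInversion w t := by
  induction ν with
  | nil => simp at ht
  | cons i ν ih =>
    have hνS : ∀ b ∈ ν, b ∈ S := fun b hb => hν b (List.mem_cons_of_mem _ hb)
    rw [rightInvSeq, List.mem_cons] at ht
    rcases ht with rfl | ht
    · have := cs.isRightInversion_wordProd_conj hS (l := ν.reverse) (by simpa using hνS)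
        (hν i List.mem_cons_self)
      rwa [wordProd_reverse, inv_inv] at this
    · exact ih hνS ht

theorem length_le_of_mem_closure {w : W} {S : Set B}
    (hS : ∀ i ∈ S, Commute (σ i) w ∧ cs.IsLeftDescent w i) {v : W}
    (hv : v ∈ Subgroup.closure (cs.simple '' S)) : ℓ v ≤ ℓ w := by
  obtain ⟨ν, hνS, rfl⟩ := cs.exists_wordProd_eq_of_mem_closure hv
  exact cs.length_le_of_forall_isRightInversion_imp fun t ht =>
    cs.isRightInversion_of_mem_rightInvSeq_of_forall_mem hS hνS
      (cs.mem_rightInvSeq_of_isRightInversion ht)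

section MinimalInvolution

variable {cs} {w : W}

theorem commute_simple_of_isLeftDescent (hw2 : w * w = 1)
    (hmin : ∀ v : W, ℓ w ≤ ℓ (v * w * v⁻¹)) {i : B} (hi : cs.IsLeftDescent w i) :
    Commute (σ i) w := by
  obtain ⟨κ, hκ, hκw⟩ := cs.exists_isReduced (σ i * w)
  have hcons : π (i :: κ) = w := by rw [wordProd_cons, ← hκw, simple_mul_simple_cancel_left]
  have hinv : cs.IsRightInversion (π (i :: κ)) (σ i) := by
    refine ⟨cs.isReflection_simple i, ?_⟩
    rwa [hcons, ← length_inv, mul_inv_rev, inv_simple, inv_eq_of_mul_eq_one_right hw2]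
  have hmem := cs.mem_rightInvSeq_of_isRightInversion hinv
  rw [rightInvSeq, List.mem_cons] at hmem
  rcases hmem with heq | hmem
  · have hκi : Commute (σ i) (π κ) := by
      rw [Commute, SemiconjBy]
      nth_rewrite 2 [heq]
      group
    rw [← hκw] at hκi
    simpa using (Commute.refl (σ i)).mul_right hκi
  · -- otherwise conjugating by `σ i` would shorten `w`
    have hshort := (cs.isRightInversion_of_mem_rightInvSeq hκ hmem).2
    have hconj := hmin (σ i)
    rw [← hκw] at hshort
    rw [inv_simple] at hconj
    rw [IsLeftDescent] at hi
    omega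

theorem isReduced_rotate (hw2 : w * w = 1) (hmin : ∀ v : W, ℓ w ≤ ℓ (v * w * v⁻¹))
    {ω : List B} (hω : cs.IsReduced ω) (hωw : π ω = w) (k : ℕ) :
    cs.IsReduced (ω.rotate k) ∧ π (ω.rotate k) = w := by
  induction k generalizing ω with
  | zero => exact ⟨by simpa using hω, by simpa using hωw⟩
  | succ k ih =>
    cases ω with
    | nil => exact ⟨by simpa using hω, by simpa using hωw⟩
    | cons i l =>
      have hcomm := commute_simple_of_isLeftDescent hw2 hmin (hωw ▸ hω.isLeftDescent_head)
      obtain ⟨hred, hprod⟩ := hω.append_singleton_of_commute (hωw ▸ hcomm)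
      rw [List.rotate_cons_succ]
      exact ih hred (hprod.trans hωw)

theorem isLeftDescent_of_mem (hw2 : w * w = 1) (hmin : ∀ v : W, ℓ w ≤ ℓ (v * w * v⁻¹))
    {ω : List B} (hω : cs.IsReduced ω) (hωw : π ω = w) {i : B} (hi : i ∈ ω) :
    cs.IsLeftDescent w i := by
  obtain ⟨l₁, l₂, rfl⟩ := List.append_of_mem hi
  obtain ⟨hred, hprod⟩ := isReduced_rotate hw2 hmin hω hωw l₁.length
  rw [List.rotate_append_length_eq, List.cons_append] at hred hprod
  exact hprod ▸ hred.isLeftDescent_head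

end MinimalInvolution

end CoxeterSystem

theorem stmt_7_general {B : Type*} {W : Type*} [Group W] [Finite B] {M : CoxeterMatrix B}
    (cs : CoxeterSystem M W) (w : W) (hw2 : w * w = 1)
    (hmin : ∀ v : W, cs.length w ≤ cs.length (v * w * v⁻¹)) :
    ∀ ω : List B, cs.IsReduced ω → w = cs.wordProd ω →
      (Subgroup.closure (cs.simple '' {b : B | b ∈ ω}) : Set W).Finite ∧
      ∀ v ∈ Subgroup.closure (cs.simple '' {b : B | b ∈ ω}),
        cs.length v ≤ cs.length w := by
  intro ω hω hωw
  have hletters : ∀ i ∈ {b : B | b ∈ ω}, Commute (cs.simple i) w ∧ cs.IsLeftDescent w i :=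
    fun i hi =>
      have hdesc := CoxeterSystem.isLeftDescent_of_mem hw2 hmin hω hωw.symm hi
      ⟨CoxeterSystem.commute_simple_of_isLeftDescent hw2 hmin hdesc, hdesc⟩
  have hle := fun v (hv : v ∈ _) => cs.length_le_of_mem_closure hletters hv
  exact ⟨(cs.finite_setOf_length_le (cs.length w)).subset hle, hle⟩

/-- If `w` is a nontrivial involution of minimal length in its conjugacy class, then the
parabolic subgroup `W_{S(w)}` generated by the letters of a reduced word for `w` is finite,
and `w` is its longest element. -/
theorem stmt_7 {B : Type*} {W : Type*} [Group W] [Finite B] {M : CoxeterMatrix B}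
    (cs : CoxeterSystem M W) (w : W) (hw2 : w * w = 1) (hw1 : w ≠ 1)
    (hmin : ∀ v : W, cs.length w ≤ cs.length (v * w * v⁻¹)) :
    ∀ ω : List B, cs.IsReduced ω → w = cs.wordProd ω →
      (Subgroup.closure (cs.simple '' {b : B | b ∈ ω}) : Set W).Finite ∧
      ∀ v ∈ Subgroup.closure (cs.simple '' {b : B | b ∈ ω}),
        cs.length v ≤ cs.length w :=
  stmt_7_general cs w hw2 hmin
end

section
/- Let (W,S) be a Coxeter system and let s,t ∈ S with m(s,t) = 2 and m(s,u) = ∞ for every u ∈ S \ {s,t}. Set S' = (S \ {s}) ∪ {st}. Then (W,S') is a Coxeter system isomorphic to (W,S); more precisely, the map fixing every u ∈ S \ {s} and sending s to st extends to an automorphism of W. -/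
/-- If `m(s,t) = 2` and `m(s,u) = ∞` for all other `u`, then replacing `s` by `st` yields a
Coxeter generating set with the same Coxeter matrix; more precisely, the map fixing all
`u ≠ s` and sending `s ↦ st` extends to an automorphism of `W`. -/
theorem stmt_11 {B : Type*} {W : Type*} [Group W] {M : CoxeterMatrix B}
    (cs : CoxeterSystem M W) (s t : B) (hst : s ≠ t) (h2 : M s t = 2)
    (hinf : ∀ u : B, u ≠ s → u ≠ t → M s u = 0) :
    ∃ φ : W ≃* W,
      (∀ u : B, u ≠ s → φ (cs.simple u) = cs.simple u) ∧
      φ (cs.simple s) = cs.simple s * cs.simple t ∧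
      ∃ cs' : CoxeterSystem M W,
        (∀ u : B, u ≠ s → cs'.simple u = cs.simple u) ∧
        cs'.simple s = cs.simple s * cs.simple t := by
  classical
  set f : B → W := fun u => if u = s then cs.simple s * cs.simple t else cs.simple u with hf
  have hsq : (cs.simple s * cs.simple t) ^ 2 = 1 := by
    have := cs.simple_mul_simple_pow s t
    rwa [h2] at this
  have hts : (cs.simple t * cs.simple s) ^ 2 = 1 := by
    have := cs.simple_mul_simple_pow' s t
    rwa [h2] at this
  have hlift : M.IsLiftable f := by
    intro i i'
    by_cases hi : i = s <;> by_cases hi' : i' = s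
    · rw [hi, hi']
      simp only [hf, if_pos rfl, M.diagonal, pow_one]
      exact pow_two (cs.simple s * cs.simple t) ▸ hsq
    · rw [hi]
      by_cases hit : i' = t
      · rw [hit]
        simp only [hf, if_pos rfl, if_neg (Ne.symm hst)]
        rw [mul_assoc, cs.simple_mul_simple_self t, mul_one, h2]
        exact pow_two (cs.simple s) ▸ cs.simple_mul_simple_self s
      · rw [hinf i' hi' hit, pow_zero]
    · rw [hi']
      by_cases hit : i = t
      · rw [hit]
        simp only [hf, if_pos rfl, if_neg (hit ▸ hi : t ≠ s)]
        rw [M.symmetric t s, h2]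
        simp [pow_two, mul_assoc, cs.simple_mul_simple_cancel_left,
          cs.simple_mul_simple_self]
      · rw [M.symmetric, hinf i hi hit, pow_zero]
    · simp only [hf, if_neg hi, if_neg hi']
      exact cs.simple_mul_simple_pow i i'
  set ψ : W →* W := cs.lift ⟨f, hlift⟩ with hψ
  have hψu : ∀ u : B, u ≠ s → ψ (cs.simple u) = cs.simple u := by
    intro u hu
    rw [hψ, cs.lift_apply_simple, hf]
    simp [hu]
  have hψs : ψ (cs.simple s) = cs.simple s * cs.simple t := by
    rw [hψ, cs.lift_apply_simple, hf]; simp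
  have hinv : ψ.comp ψ = MonoidHom.id W := by
    apply cs.ext_simple
    intro i
    by_cases hi : i = s
    · subst hi
      simp only [MonoidHom.comp_apply, MonoidHom.id_apply, hψs, map_mul,
        hψu t (Ne.symm hst)]
      rw [mul_assoc, cs.simple_mul_simple_self t, mul_one]
    · simp [MonoidHom.comp_apply, hψu i hi]
  have hinv' : ∀ x : W, ψ (ψ x) = x := fun x => congrArg (· x) hinv
  refine ⟨⟨⟨ψ, ψ, hinv', hinv'⟩, map_mul ψ⟩, hψu, hψs,
    cs.map ⟨⟨ψ, ψ, hinv', hinv'⟩, map_mul ψ⟩, ?_, ?_⟩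
  · intro u hu
    rw [cs.map_simple]
    exact hψu u hu
  · rw [cs.map_simple]
    exact hψs
end
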